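/- The subgroup A_μ = { g ∈ G : lim_{n→∞} μ^{*n}(g)/μ^{*n}(e) = 1 } is amenable. -/

import Mathlib

open Filter Topology
open scoped Classical

/-- Convolution of two real-valued functions on a discrete group. -/
noncomputable def conv {G : Type*} [Group G] (μ τ : G → ℝ) : G → ℝ :=
  fun y => ∑' x : G, μ x * τ (x⁻¹ * y)

/-- `n`-fold convolution power, with `μ^{*0}` the Dirac mass at the identity. -/
noncomputable def convPow {G : Type*} [Group G] (μ : G → ℝ) : ℕ → G → ℝ
  | 0 => fun x => if x = 1 then 1 else 0
  | n + 1 => conv (convPow μ n) μ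

/-- `μ` is a probability measure on the discrete group `G`. -/
def IsProb {G : Type*} [Group G] (μ : G → ℝ) : Prop :=
  (∀ x, 0 ≤ μ x) ∧ ∑' x : G, μ x = 1

/-- `μ` is symmetric. -/
def MeasSymm {G : Type*} [Group G] (μ : G → ℝ) : Prop := ∀ x, μ x⁻¹ = μ x

/-- `μ` is aperiodic: `gcd { n ≥ 1 | μ^{*n}(e) > 0 } = 1`. -/
def IsAperiodic {G : Type*} [Group G] (μ : G → ℝ) : Prop :=
  ∀ d : ℕ, (∀ n : ℕ, 1 ≤ n → 0 < convPow μ n 1 → d ∣ n) → d = 1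

/-- The support of `μ` generates `G`. -/
def GeneratingSupport {G : Type*} [Group G] (μ : G → ℝ) : Prop :=
  Subgroup.closure {x : G | 0 < μ x} = ⊤

/-- The set `A_μ = { g | μ^{*n}(g)/μ^{*n}(e) → 1 }`. -/
def Amu {G : Type*} [Group G] (μ : G → ℝ) : Set G :=
  {g | Tendsto (fun n => convPow μ n g / convPow μ n 1) atTop (𝓝 1)}

/-- ℓ² inner product. -/
noncomputable def l2inner {G : Type*} (f h : G → ℝ) : ℝ := ∑' x : G, f x * h x

/-- ℓ² norm. -/
noncomputable def l2norm {G : Type*} (f : G → ℝ) : ℝ :=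
  Real.sqrt (∑' x : G, (f x) ^ 2)

/-- Left translation: `(g · f)(x) = f (g⁻¹ x)`. -/
def ltrans {G : Type*} [Group G] (g : G) (f : G → ℝ) : G → ℝ := fun x => f (g⁻¹ * x)

/-- The normalized convolution powers `ξ_n = μ^{*n}/‖μ^{*n}‖₂`. -/
noncomputable def xi {G : Type*} [Group G] (μ : G → ℝ) (n : ℕ) : G → ℝ :=
  fun x => convPow μ n x / l2norm (convPow μ n)

/-- Reiter-type characterization of amenability: a sequence of almost-invariant
unit vectors in `ℓ²(K)`. -/
def ReiterAmenable (K : Type*) [Group K] : Prop :=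
  ∃ ψ : ℕ → K → ℝ, (∀ n, ∑' x : K, (ψ n x) ^ 2 = 1) ∧
    ∀ k : K, Tendsto
      (fun n => Real.sqrt (∑' x : K, (ψ n (k⁻¹ * x) - ψ n x) ^ 2)) atTop (𝓝 0)


/-!
Let `ξₙ = μ^{*n} / ‖μ^{*n}‖₂`. Since `μ` is symmetric, `⟨g · ξₙ, ξₙ⟩ = μ^{*2n}(g) / μ^{*2n}(e)`,
so `‖g · ξₙ - ξₙ‖₂² = 2 - 2 μ^{*2n}(g) / μ^{*2n}(e) → 0` for every `g ∈ A_μ`. These almost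
invariant vectors of `ℓ²(G)` are pushed down to `ℓ²(H)` by writing `G = H · T` for a transversal
`T` of the right cosets of `H` and letting `ψₙ(h)` be the `ℓ²`-norm of `ξₙ` on the slice `h · T`:
this keeps `‖ψₙ‖₂ = 1`, and the reverse triangle inequality on each slice gives
`‖k · ψₙ - ψₙ‖₂ ≤ ‖k · ξₙ - ξₙ‖₂` for `k ∈ H`.

The convolution identities are proved for `ℝ≥0∞`-valued functions, where sums can be
interchanged freely, and then transferred to `ℝ`.
-/

open scoped ENNReal

theorem hasSum_toReal_tsum_ofReal {ι : Type*} {f : ι → ℝ} (hf : ∀ i, 0 ≤ f i)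
    (h : ∑' i, ENNReal.ofReal (f i) ≠ ⊤) :
    HasSum f (∑' i, ENNReal.ofReal (f i)).toReal := by
  rw [ENNReal.tsum_toReal_eq (ENNReal.ne_top_of_tsum_ne_top h)]
  simpa only [ENNReal.toReal_ofReal (hf _)] using (ENNReal.summable_toReal h).hasSum

theorem hasSum_sub_sq {ι : Type*} {a b : ι → ℝ} {A B C : ℝ} (ha : HasSum (fun i => a i ^ 2) A)
    (hb : HasSum (fun i => b i ^ 2) B) (hab : HasSum (fun i => a i * b i) C) :
    HasSum (fun i => (a i - b i) ^ 2) (A + B - 2 * C) :=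
  ((ha.add hb).sub (hab.mul_left 2)).congr_fun fun i => by ring

theorem summable_sub_sq {ι : Type*} {a b : ι → ℝ} (ha : Summable fun i => a i ^ 2)
    (hb : Summable fun i => b i ^ 2) : Summable fun i => (a i - b i) ^ 2 :=
  ((ha.add hb).mul_left 2).of_nonneg_of_le (fun _ => sq_nonneg _)
    fun i => by nlinarith [sq_nonneg (a i + b i)]

theorem sqrt_tsum_sq_eq_norm {ι : Type*} (f : lp (fun _ : ι => ℝ) 2) :
    √(∑' i, f i ^ 2) = ‖f‖ := by
  rw [lp.norm_eq_tsum_rpow (by norm_num), Real.sqrt_eq_rpow]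
  norm_num

theorem sub_sqrt_tsum_sq_sq_le {ι : Type*} {a b : ι → ℝ} (ha : Summable fun i => a i ^ 2)
    (hb : Summable fun i => b i ^ 2) :
    (√(∑' i, a i ^ 2) - √(∑' i, b i ^ 2)) ^ 2 ≤ ∑' i, (a i - b i) ^ 2 := by
  have hmem {c : ι → ℝ} (hc : Summable fun i => c i ^ 2) : Memℓp c 2 :=
    (memℓp_gen_iff (by norm_num)).2 (by simpa using hc)
  let A : lp (fun _ : ι => ℝ) 2 := ⟨a, hmem ha⟩
  let B : lp (fun _ : ι => ℝ) 2 := ⟨b, hmem hb⟩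
  have hsub := sqrt_tsum_sq_eq_norm (A - B)
  rw [sqrt_tsum_sq_eq_norm A, sqrt_tsum_sq_eq_norm B, ← sq_abs,
    ← Real.sq_sqrt (tsum_nonneg fun i => sq_nonneg (a i - b i))]
  simp only [lp.coeFn_sub, Pi.sub_apply] at hsub
  rw [hsub]
  exact pow_le_pow_left₀ (abs_nonneg _) (abs_norm_sub_norm_le A B) 2

section ENNRealConvolution

variable {G : Type*} [Group G]

noncomputable def econv (f g : G → ℝ≥0∞) : G → ℝ≥0∞ :=
  fun y => ∑' x, f x * g (x⁻¹ * y)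

noncomputable def econvPow (f : G → ℝ≥0∞) : ℕ → G → ℝ≥0∞
  | 0 => fun x => if x = 1 then 1 else 0
  | n + 1 => econv (econvPow f n) f

theorem econv_dirac_left (f : G → ℝ≥0∞) : econv (fun x => if x = 1 then 1 else 0) f = f := by
  funext y
  simp only [econv, ite_mul, one_mul, zero_mul]
  rw [tsum_ite_eq, inv_one, one_mul]

theorem econv_dirac_right (f : G → ℝ≥0∞) : econv f (fun x => if x = 1 then 1 else 0) = f := by
  funext y
  simp only [econv, mul_ite, mul_one, mul_zero, inv_mul_eq_one]
  exact tsum_ite_eq y _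

theorem econv_assoc (f g h : G → ℝ≥0∞) : econv (econv f g) h = econv f (econv g h) := by
  funext y
  calc ∑' x, (∑' z, f z * g (z⁻¹ * x)) * h (x⁻¹ * y)
      = ∑' z, f z * ∑' x, g (z⁻¹ * x) * h (x⁻¹ * y) := by
        simp_rw [← ENNReal.tsum_mul_right, ← ENNReal.tsum_mul_left, mul_assoc]
        exact ENNReal.tsum_comm
    _ = ∑' z, f z * ∑' u, g u * h (u⁻¹ * (z⁻¹ * y)) := by
        refine tsum_congr fun z => congrArg (f z * ·) ?_
        rw [← (Equiv.mulLeft z).tsum_eq]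
        simp [mul_assoc]

theorem econv_apply_inv (f g : G → ℝ≥0∞) (y : G) :
    econv f g y⁻¹ = econv (fun x => g x⁻¹) (fun x => f x⁻¹) y := by
  rw [econv, econv, ← (Equiv.mulLeft y⁻¹).tsum_eq]
  refine tsum_congr fun u => ?_
  simp [mul_comm, mul_assoc]

theorem tsum_econv (f g : G → ℝ≥0∞) : ∑' y, econv f g y = (∑' x, f x) * ∑' x, g x := by
  simp only [econv]
  rw [ENNReal.tsum_comm, ← ENNReal.tsum_mul_right]
  refine tsum_congr fun x => ?_
  rw [ENNReal.tsum_mul_left, ← (Equiv.mulLeft x⁻¹).tsum_eq g]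
  rfl

theorem econvPow_one (f : G → ℝ≥0∞) : econvPow f 1 = f :=
  econv_dirac_left f

theorem econvPow_add (f : G → ℝ≥0∞) (m n : ℕ) :
    econvPow f (m + n) = econv (econvPow f m) (econvPow f n) := by
  induction n with
  | zero => exact (econv_dirac_right _).symm
  | succ n ih => rw [← add_assoc, econvPow, ih, econv_assoc, econvPow]

theorem tsum_econvPow (f : G → ℝ≥0∞) (n : ℕ) : ∑' x, econvPow f n x = (∑' x, f x) ^ n := by
  induction n with
  | zero => simp [econvPow]
  | succ n ih => rw [econvPow, tsum_econv, ih, pow_succ]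

theorem econvPow_apply_inv {f : G → ℝ≥0∞} (hf : ∀ x, f x⁻¹ = f x) (n : ℕ) (y : G) :
    econvPow f n y⁻¹ = econvPow f n y := by
  induction n generalizing y with
  | zero => simp [econvPow]
  | succ n ih =>
    calc econvPow f (n + 1) y⁻¹ = econv (fun x => f x⁻¹) (fun x => econvPow f n x⁻¹) y :=
          econv_apply_inv _ _ _
      _ = econvPow f (1 + n) y := by simp only [hf, ih, econvPow_add, econvPow_one]
      _ = econvPow f (n + 1) y := by rw [add_comm]

theorem tsum_econvPow_translate_mul {f : G → ℝ≥0∞} (hf : ∀ x, f x⁻¹ = f x) (n : ℕ) (g : G) :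
    ∑' x, econvPow f n (g⁻¹ * x) * econvPow f n x = econvPow f (2 * n) g := by
  rw [two_mul, econvPow_add, econv]
  refine tsum_congr fun x => ?_
  rw [mul_comm, ← econvPow_apply_inv hf n (x⁻¹ * g), mul_inv_rev, inv_inv]

end ENNRealConvolution

section ConvolutionPowers

variable {G : Type*} [Group G] {μ : G → ℝ}

theorem IsProb.summable (hprob : IsProb μ) : Summable μ := by
  by_contra h
  exact one_ne_zero (hprob.2.symm.trans (tsum_eq_zero_of_not_summable h))

theorem IsProb.tsum_ofReal (hprob : IsProb μ) : ∑' x, ENNReal.ofReal (μ x) = 1 := by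
  rw [← ENNReal.ofReal_tsum_of_nonneg hprob.1 hprob.summable, hprob.2, ENNReal.ofReal_one]

theorem convPow_nonneg (h0 : ∀ x, 0 ≤ μ x) (n : ℕ) (x : G) : 0 ≤ convPow μ n x := by
  induction n generalizing x with
  | zero => simp only [convPow]; split_ifs <;> norm_num
  | succ n ih => exact tsum_nonneg fun y => mul_nonneg (ih y) (h0 _)

theorem ofReal_convPow (h0 : ∀ x, 0 ≤ μ x) (hμ : Summable μ) (n : ℕ) (x : G) :
    ENNReal.ofReal (convPow μ n x) = econvPow (fun x => ENNReal.ofReal (μ x)) n x := by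
  induction n generalizing x with
  | zero => simp only [convPow, econvPow]; split_ifs <;> simp
  | succ n ih =>
    set M : G → ℝ≥0∞ := fun x => ENNReal.ofReal (μ x)
    have hterm (y : G) : ENNReal.ofReal (convPow μ n y * μ (y⁻¹ * x))
        = econvPow M n y * M (y⁻¹ * x) := by
      rw [ENNReal.ofReal_mul (convPow_nonneg h0 n y), ih]
    have hfin : econvPow M (n + 1) x ≠ ⊤ := by
      refine ENNReal.ne_top_of_tsum_ne_top ?_ x
      rw [tsum_econvPow, ← ENNReal.ofReal_tsum_of_nonneg h0 hμ]
      exact ENNReal.pow_ne_top ENNReal.ofReal_ne_top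
    have hsum := hasSum_toReal_tsum_ofReal (f := fun y => convPow μ n y * μ (y⁻¹ * x))
      (fun y => mul_nonneg (convPow_nonneg h0 n y) (h0 _)) (by simp only [hterm]; exact hfin)
    change ENNReal.ofReal (∑' y, convPow μ n y * μ (y⁻¹ * x)) = _
    rw [hsum.tsum_eq]
    simp only [hterm]
    exact ENNReal.ofReal_toReal hfin

theorem hasSum_convPow_translate_mul (h0 : ∀ x, 0 ≤ μ x) (hμ : Summable μ)
    (hsymm : MeasSymm μ) (n : ℕ) (g : G) :
    HasSum (fun x => convPow μ n (g⁻¹ * x) * convPow μ n x) (convPow μ (2 * n) g) := by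
  have htsum : ∑' x, ENNReal.ofReal (convPow μ n (g⁻¹ * x) * convPow μ n x)
      = ENNReal.ofReal (convPow μ (2 * n) g) := by
    simp only [ENNReal.ofReal_mul (convPow_nonneg h0 n _), ofReal_convPow h0 hμ]
    exact tsum_econvPow_translate_mul (fun x => by rw [hsymm]) n g
  have hsum := hasSum_toReal_tsum_ofReal
    (fun x => mul_nonneg (convPow_nonneg h0 n _) (convPow_nonneg h0 n x))
    (htsum ▸ ENNReal.ofReal_ne_top)
  rwa [htsum, ENNReal.toReal_ofReal (convPow_nonneg h0 _ g)] at hsum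

theorem convPow_two_mul_one_pos (hprob : IsProb μ) (hsymm : MeasSymm μ) (n : ℕ) :
    0 < convPow μ (2 * n) 1 := by
  rw [← ENNReal.ofReal_pos, ofReal_convPow hprob.1 hprob.summable, pos_iff_ne_zero,
    ← tsum_econvPow_translate_mul (fun x => by rw [hsymm]) n 1]
  intro h
  simp only [inv_one, one_mul, ENNReal.tsum_eq_zero, mul_self_eq_zero] at h
  have htotal := tsum_econvPow (fun x => ENNReal.ofReal (μ x)) n
  simp [h, hprob.tsum_ofReal] at htotal

end ConvolutionPowers

section NormalizedConvolutionPowers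

variable {G : Type*} [Group G] {μ : G → ℝ}

theorem l2norm_convPow (hprob : IsProb μ) (hsymm : MeasSymm μ) (n : ℕ) :
    l2norm (convPow μ n) = √(convPow μ (2 * n) 1) := by
  rw [l2norm, ← (hasSum_convPow_translate_mul hprob.1 hprob.summable hsymm n 1).tsum_eq]
  simp only [inv_one, one_mul, sq]

theorem hasSum_xi_translate_mul (hprob : IsProb μ) (hsymm : MeasSymm μ) (n : ℕ) (g : G) :
    HasSum (fun x => xi μ n (g⁻¹ * x) * xi μ n x)
      (convPow μ (2 * n) g / convPow μ (2 * n) 1) := by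
  refine ((hasSum_convPow_translate_mul hprob.1 hprob.summable hsymm n g).div_const
    (convPow μ (2 * n) 1)).congr_fun fun x => ?_
  rw [xi, xi, l2norm_convPow hprob hsymm, div_mul_div_comm,
    Real.mul_self_sqrt (convPow_nonneg hprob.1 _ 1)]

theorem hasSum_xi_sq (hprob : IsProb μ) (hsymm : MeasSymm μ) (n : ℕ) :
    HasSum (fun x => xi μ n x ^ 2) 1 := by
  simpa [sq, div_self (convPow_two_mul_one_pos hprob hsymm n).ne'] using
    hasSum_xi_translate_mul hprob hsymm n 1

theorem hasSum_xi_translate_sub_sq (hprob : IsProb μ) (hsymm : MeasSymm μ) (n : ℕ) (g : G) :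
    HasSum (fun x => (xi μ n (g⁻¹ * x) - xi μ n x) ^ 2)
      (2 - 2 * (convPow μ (2 * n) g / convPow μ (2 * n) 1)) := by
  have hsq := hasSum_xi_sq hprob hsymm n
  have htranslate : HasSum (fun x => xi μ n (g⁻¹ * x) ^ 2) 1 :=
    (Equiv.mulLeft g⁻¹).hasSum_iff.2 hsq
  simpa [one_add_one_eq_two] using
    hasSum_sub_sq htranslate hsq (hasSum_xi_translate_mul hprob hsymm n g)

theorem tendsto_tsum_xi_translate_sub_sq (hprob : IsProb μ) (hsymm : MeasSymm μ) {g : G}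
    (hg : g ∈ Amu μ) :
    Tendsto (fun n => ∑' x, (xi μ n (g⁻¹ * x) - xi μ n x) ^ 2) atTop (𝓝 0) := by
  have hratio : Tendsto (fun n => convPow μ (2 * n) g / convPow μ (2 * n) 1) atTop (𝓝 1) :=
    hg.comp (tendsto_id.const_mul_atTop' two_pos)
  simp_rw [(hasSum_xi_translate_sub_sq hprob hsymm _ g).tsum_eq]
  simpa using (hratio.const_mul 2).const_sub 2

end NormalizedConvolutionPowers

section RestrictionToSubgroup

variable {G : Type*} [Group G] (H : Subgroup G)

noncomputable def subgroupProdRightCosetEquiv : H × Quotient (QuotientGroup.rightRel H) ≃ G :=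
  Equiv.ofBijective (fun p => p.1 * p.2.out) <| by
    constructor
    · rintro ⟨h, q⟩ ⟨h', q'⟩ heq
      simp only at heq
      have hq : q = q' := by
        rw [← Quotient.out_eq q, ← Quotient.out_eq q']
        refine Quotient.sound (QuotientGroup.rightRel_apply.2 ?_)
        have hdiff : q'.out * q.out⁻¹ = (h' : G)⁻¹ * h := by
          rw [mul_inv_eq_iff_eq_mul, mul_assoc, heq, inv_mul_cancel_left]
        rw [hdiff]
        exact mul_mem (inv_mem h'.2) h.2
      subst hq
      simpa using heq
    · intro x
      refine ⟨(⟨x * (⟦x⟧ : Quotient _).out⁻¹, ?_⟩, ⟦x⟧), inv_mul_cancel_right x _⟩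
      exact QuotientGroup.rightRel_apply.1 (Quotient.mk_out x)

theorem subgroupProdRightCosetEquiv_mul (k h : H) (q : Quotient (QuotientGroup.rightRel H)) :
    subgroupProdRightCosetEquiv H (k * h, q) = k * subgroupProdRightCosetEquiv H (h, q) := by
  change ((k * h : H) : G) * q.out = k * (h * q.out)
  rw [Subgroup.coe_mul, mul_assoc]

noncomputable def sliceNorm (ξ : G → ℝ) (h : H) : ℝ :=
  √(∑' q, ξ (subgroupProdRightCosetEquiv H (h, q)) ^ 2)

theorem hasSum_sliceNorm_sq {ξ : G → ℝ} {a : ℝ} (hξ : HasSum (fun x => ξ x ^ 2) a) :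
    HasSum (fun h => sliceNorm H ξ h ^ 2) a := by
  have hprod := (subgroupProdRightCosetEquiv H).hasSum_iff.2 hξ
  refine hprod.prod_fiberwise fun h => ?_
  rw [sliceNorm, Real.sq_sqrt (tsum_nonneg fun _ => sq_nonneg _)]
  exact (hprod.summable.prod_factor h).hasSum

theorem tsum_sliceNorm_translate_sub_sq_le {ξ : G → ℝ} (hξ : Summable fun x => ξ x ^ 2)
    (k : H) :
    ∑' h, (sliceNorm H ξ (k⁻¹ * h) - sliceNorm H ξ h) ^ 2
      ≤ ∑' x, (ξ ((k : G)⁻¹ * x) - ξ x) ^ 2 := by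
  set e := subgroupProdRightCosetEquiv H
  have htranslate : Summable fun x => ξ ((k : G)⁻¹ * x) ^ 2 :=
    (Equiv.mulLeft (k : G)⁻¹).summable_iff.2 hξ
  have hdiff := e.hasSum_iff.2 (summable_sub_sq htranslate hξ).hasSum
  have hslices := hdiff.prod_fiberwise fun h => (hdiff.summable.prod_factor h).hasSum
  have hle (h : H) : (sliceNorm H ξ (k⁻¹ * h) - sliceNorm H ξ h) ^ 2
      ≤ ∑' q, (ξ ((k : G)⁻¹ * e (h, q)) - ξ (e (h, q))) ^ 2 := by
    simp only [sliceNorm, e, subgroupProdRightCosetEquiv_mul, Subgroup.coe_inv]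
    exact sub_sqrt_tsum_sq_sq_le ((e.summable_iff.2 htranslate).prod_factor h)
      ((e.summable_iff.2 hξ).prod_factor h)
  exact hasSum_le hle (hslices.summable.of_nonneg_of_le (fun _ => sq_nonneg _) hle).hasSum
    hslices

theorem reiterAmenable_of_tendsto_translate (ξ : ℕ → G → ℝ)
    (hunit : ∀ n, HasSum (fun x => ξ n x ^ 2) 1)
    (hinv : ∀ k ∈ H, Tendsto (fun n => ∑' x, (ξ n (k⁻¹ * x) - ξ n x) ^ 2) atTop (𝓝 0)) :
    ReiterAmenable H := by
  refine ⟨fun n => sliceNorm H (ξ n), fun n => (hasSum_sliceNorm_sq H (hunit n)).tsum_eq,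
    fun k => ?_⟩
  rw [← Real.sqrt_zero]
  exact (squeeze_zero (fun n => tsum_nonneg fun _ => sq_nonneg _)
    (fun n => tsum_sliceNorm_translate_sub_sq_le H (hunit n).summable k) (hinv k k.2)).sqrt

end RestrictionToSubgroup

theorem stmt5_general {G : Type*} [Group G] (μ : G → ℝ)
    (hprob : IsProb μ) (hsymm : MeasSymm μ) :
    ∀ H : Subgroup G, (H : Set G) = Amu μ → ReiterAmenable H := by
  intro H hH
  refine reiterAmenable_of_tendsto_translate H (xi μ) (hasSum_xi_sq hprob hsymm) fun k hk => ?_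
  exact tendsto_tsum_xi_translate_sub_sq hprob hsymm (hH ▸ hk)

theorem stmt5 {G : Type*} [Group G] [Group.FG G] (μ : G → ℝ)
    (hprob : IsProb μ) (hsymm : MeasSymm μ) (haper : IsAperiodic μ)
    (hgen : GeneratingSupport μ) :
    ∀ H : Subgroup G, (H : Set G) = Amu μ → ReiterAmenable H :=
  stmt5_general μ hprob hsymm
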